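/- Assume the setup: κ is a singular cardinal with cf(κ) = ρ, 2^ρ ≤ κ, and ρ < μ_0, where ⟨μ_i : i < ρ⟩ is an increasing sequence cofinal in κ, each μ_i carries a μ_i-complete uniform ultrafilter U_i with an almost-decreasing generating sequence ⟨A^i_η : η < θ_i⟩ of regular length θ_i with A^i_η ⊆ [μ_i^*, μ_i) where μ_i^* = sup_{i'<i} μ_{i'}; ⟨f_α : α < σ⟩ is a scale in ∏_{i<ρ} μ_i with σ regular and κ < σ; ⟨g_β : β < τ⟩ is a scale in ∏_{i<ρ} θ_i with τ regular and σ ≤ τ; E is a uniform ultrafilter on ρ; and for X ∈ E, α < σ, β < τ set Y_{X,α,β} = ⋃_{i∈X} (A^i_{g_β(i)} \ f_α(i)). Then the family {Y_{X,α,β} : X ∈ E, α < σ, β < τ} has cardinality τ, and for every n < ω, every γ < κ and all (X_k, α_k, β_k) ∈ E × σ × τ for k < n, the intersection ⋂_{k<n} Y_{X_k,α_k,β_k} contains an ordinal greater than γ; in particular the family generates a proper uniform filter on κ. -/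

import Mathlib

universe u

open Cardinal Set

/-- `A ⊆* B` below the cardinal `κ`: the difference `A \ B` is bounded below `κ`
(where `κ` is identified with its set of ordinals `Set.Iio κ.ord`). -/
def AlmostSub (κ : Cardinal.{u}) (A B : Set Ordinal.{u}) : Prop :=
  ∃ β, β < κ.ord ∧ A \ B ⊆ Set.Iio β

/-- An ultrafilter on the cardinal `κ`, identified with its set of ordinals `Set.Iio κ.ord`. -/
structure UltrafilterOn (κ : Cardinal.{u}) : Type (u + 1) where
  sets : Set (Set Ordinal.{u})
  sets_subset : ∀ A ∈ sets, A ⊆ Set.Iio κ.ord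
  univ_mem : Set.Iio κ.ord ∈ sets
  superset_mem : ∀ A ∈ sets, ∀ B, B ⊆ Set.Iio κ.ord → A ⊆ B → B ∈ sets
  inter_mem : ∀ A ∈ sets, ∀ B ∈ sets, A ∩ B ∈ sets
  empty_not_mem : ∅ ∉ sets
  mem_or_compl_mem : ∀ A, A ⊆ Set.Iio κ.ord → A ∈ sets ∨ Set.Iio κ.ord \ A ∈ sets

namespace UltrafilterOn

variable {κ : Cardinal.{u}}

/-- A uniform ultrafilter: every member has cardinality `κ`. -/
def IsUniform (U : UltrafilterOn κ) : Prop :=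
  ∀ A ∈ U.sets, #A = Cardinal.lift.{u + 1, u} κ

/-- `κ`-completeness: `U` is closed under intersections of fewer than `κ` many of its members. -/
def IsComplete (U : UltrafilterOn κ) : Prop :=
  ∀ S : Set (Set Ordinal.{u}), S.Nonempty → S ⊆ U.sets →
    #S < Cardinal.lift.{u + 1, u} κ → ⋂₀ S ∈ U.sets

/-- Nonprincipal: no singleton is a member. -/
def IsNonprincipal (U : UltrafilterOn κ) : Prop :=
  ∀ β : Ordinal.{u}, {β} ∉ U.sets

/-- A base for `U`: a subfamily `B ⊆ U` such that every member of `U` almost contains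
a member of `B`. -/
def IsBase (U : UltrafilterOn κ) (B : Set (Set Ordinal.{u})) : Prop :=
  B ⊆ U.sets ∧ ∀ X ∈ U.sets, ∃ Y ∈ B, AlmostSub κ Y X

/-- The character of `U`: the least cardinality of a base for `U`. -/
noncomputable def char (U : UltrafilterOn κ) : Cardinal.{u + 1} :=
  sInf {c | ∃ B, U.IsBase B ∧ #B = c}

/-- `⟨A i : i < θord⟩` is an almost-decreasing generating sequence for `U`:
its entries are members of `U`, it is `⊆*`-decreasing, and its range is a base for `U`. -/
def IsADGenSeq (U : UltrafilterOn κ) (θord : Ordinal.{u})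
    (A : Ordinal.{u} → Set Ordinal.{u}) : Prop :=
  (∀ i, i < θord → A i ∈ U.sets) ∧
  (∀ i j, i ≤ j → j < θord → AlmostSub κ (A j) (A i)) ∧
  U.IsBase (A '' Set.Iio θord)

/-- A normal measure on `κ`: a `κ`-complete nonprincipal ultrafilter such that every
function regressive on a member of `U` is constant on a member of `U`. -/
def IsNormalMeasure (U : UltrafilterOn κ) : Prop :=
  U.IsComplete ∧ U.IsNonprincipal ∧
  ∀ f : Ordinal.{u} → Ordinal.{u},
    (∃ X ∈ U.sets, ∀ α ∈ X, f α < α) → ∃ Y ∈ U.sets, ∃ c, ∀ α ∈ Y, f α = c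

end UltrafilterOn

/-- `κ` is a measurable cardinal: it is uncountable and carries a `κ`-complete
nonprincipal ultrafilter. -/
def IsMeasurableCard (κ : Cardinal.{u}) : Prop :=
  ℵ₀ < κ ∧ ∃ U : UltrafilterOn κ, U.IsComplete ∧ U.IsNonprincipal

/-- `f <* g`: eventual (pointwise) domination below `ρord`. -/
def EvDomLt (ρord : Ordinal.{u}) (f g : Ordinal.{u} → Ordinal.{u}) : Prop :=
  ∃ i₀, i₀ < ρord ∧ ∀ i, i₀ ≤ i → i < ρord → f i < g i

/-- Membership in the product `∏_{i < ρord} lam i` (of cardinals `lam i`). -/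
def InProd (ρord : Ordinal.{u}) (lam : Ordinal.{u} → Cardinal.{u})
    (f : Ordinal.{u} → Ordinal.{u}) : Prop :=
  ∀ i, i < ρord → f i < (lam i).ord

/-- `⟨g η : η < ν⟩` is a scale of length `ν` in `∏_{i < ρord} lam i`:
a `<*`-increasing and `<*`-cofinal sequence in the product. -/
def IsScale (ρord : Ordinal.{u}) (lam : Ordinal.{u} → Cardinal.{u}) (ν : Cardinal.{u})
    (g : Ordinal.{u} → Ordinal.{u} → Ordinal.{u}) : Prop :=
  (∀ η, η < ν.ord → InProd ρord lam (g η)) ∧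
  (∀ η₁ η₂, η₁ < η₂ → η₂ < ν.ord → EvDomLt ρord (g η₁) (g η₂)) ∧
  ∀ f, InProd ρord lam f → ∃ η, η < ν.ord ∧ EvDomLt ρord f (g η)

/-- `supBelow μ i = sup_{i' < i} μ i'`. -/
noncomputable def supBelow (μ : Ordinal.{u} → Cardinal.{u}) (i : Ordinal.{u}) : Cardinal.{u} :=
  sSup {c | ∃ i', i' < i ∧ c = μ i'}

/-!
Fix a finite intersection of sets `Y X α β`. For every `i` in the intersection of the `X`'s
(an `E`-large, hence unbounded, set of indices) it contains the `U_i`-large set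
`⋂ (A^i_{g_β(i)} \ f_α(i))`, of size `μ_i`; as the `μ_i` are cofinal in `κ`, the intersection
is unbounded in `κ` and everything containing it has size `κ`.

There are at most `2^ρ · σ · τ = τ` sets `Y X α β`. If there were fewer, then by regularity
of `τ` the map `β ↦ Y ρ 0 β` would be constant on an unbounded set `T ⊆ τ`. Along `T` the
scale `g` is unbounded in some coordinate `i`, and since the `A^i` live in pairwise disjoint
blocks, `A^i_{g_β(i)} \ f_0(i)` would not depend on `β ∈ T`. As the `A^i_η` are almost
decreasing and generate `U_i`, this member of `U_i` would be almost contained in every member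
of `U_i`, which is impossible for a uniform ultrafilter: split it into two halves of full size.
-/

theorem Cardinal.exists_lt_mem_of_lift_le_mk {c : Cardinal.{u}} (hc : ℵ₀ ≤ c) {T : Set Ordinal.{u}}
    (hT : Cardinal.lift.{u + 1} c ≤ #T) {b : Ordinal.{u}} (hb : b < c.ord) : ∃ x ∈ T, b < x := by
  by_contra! h
  have hsucc : (Order.succ b).card < c :=
    Cardinal.lt_ord.mp ((Cardinal.isSuccLimit_ord hc).succ_lt hb)
  have hsub : T ⊆ Iio (Order.succ b) := fun x hx => Order.lt_succ_iff.mpr (h x hx)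
  have := hT.trans ((Cardinal.mk_le_mk_of_subset hsub).trans_eq (Cardinal.mk_Iio_ordinal _))
  exact (Cardinal.lift_le.mp this).not_gt hsucc

theorem Cardinal.mk_lt_of_subset_Iio {c : Cardinal.{u}} {s : Set Ordinal.{u}} {b : Ordinal.{u}}
    (hb : b < c.ord) (hs : s ⊆ Iio b) : #s < Cardinal.lift.{u + 1} c := by
  refine (Cardinal.mk_le_mk_of_subset hs).trans_lt ?_
  rw [Cardinal.mk_Iio_ordinal, Cardinal.lift_lt]
  exact Cardinal.lt_ord.mp hb

theorem Cardinal.exists_subset_mk_eq_mk_diff_eq {α : Type*} {s : Set α} (hs : ℵ₀ ≤ #s) :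
    ∃ p ⊆ s, #p = #s ∧ #(↥(s \ p)) = #s := by
  obtain ⟨e⟩ : Nonempty (s ⊕ s ≃ s) := Cardinal.eq.mp (by simp [Cardinal.add_eq_self hs])
  have hmk : ∀ {β : Type _} (j : s → β) (hj : Function.Injective j) (k : β → s),
      Function.Injective k → #(Subtype.val '' range (k ∘ j)) = #s := fun j hj k hk => by
    rw [Cardinal.mk_image_eq Subtype.val_injective, Cardinal.mk_range_eq _ (hk.comp hj)]
  refine ⟨_, by simp [image_subset_iff], hmk Sum.inl Sum.inl_injective e e.injective, ?_⟩
  refine le_antisymm (Cardinal.mk_le_mk_of_subset sdiff_subset) ?_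
  rw [← hmk Sum.inr Sum.inr_injective e e.injective]
  refine Cardinal.mk_le_mk_of_subset ?_
  rintro _ ⟨_, ⟨y, rfl⟩, rfl⟩
  refine ⟨(e (Sum.inr y)).2, ?_⟩
  rintro ⟨_, ⟨z, rfl⟩, hz⟩
  exact Sum.inl_ne_inr (e.injective (Subtype.val_injective hz))

theorem AlmostSub.trans {κ : Cardinal.{u}} {A B C : Set Ordinal.{u}}
    (hAB : AlmostSub κ A B) (hBC : AlmostSub κ B C) : AlmostSub κ A C := by
  obtain ⟨b₁, hb₁, h₁⟩ := hAB
  obtain ⟨b₂, hb₂, h₂⟩ := hBC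
  refine ⟨max b₁ b₂, max_lt hb₁ hb₂, fun x hx => ?_⟩
  by_cases hxB : x ∈ B
  · exact mem_Iio.mpr <| (h₂ ⟨hxB, hx.2⟩).trans_le (le_max_right _ _)
  · exact mem_Iio.mpr <| (h₁ ⟨hx.1, hxB⟩).trans_le (le_max_left _ _)

theorem AlmostSub.of_diff_Iio_subset {κ : Cardinal.{u}} {A B : Set Ordinal.{u}} {c : Ordinal.{u}}
    (hc : c < κ.ord) (h : A \ Iio c ⊆ B) : AlmostSub κ A B :=
  ⟨c, hc, fun _ hx => by_contra fun hxc => hx.2 (h ⟨hx.1, hxc⟩)⟩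

namespace UltrafilterOn

variable {κ : Cardinal.{u}} {U : UltrafilterOn κ}

theorem IsUniform.exists_lt_mem (hU : U.IsUniform) (hκ : ℵ₀ ≤ κ) {X : Set Ordinal.{u}}
    (hX : X ∈ U.sets) {b : Ordinal.{u}} (hb : b < κ.ord) : ∃ x ∈ X, b < x :=
  Cardinal.exists_lt_mem_of_lift_le_mk hκ (hU X hX).ge hb

theorem IsUniform.diff_Iio_mem (hU : U.IsUniform) {A : Set Ordinal.{u}} (hA : A ∈ U.sets)
    {c : Ordinal.{u}} (hc : c < κ.ord) : A \ Iio c ∈ U.sets := by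
  have hc' : Iio c ∉ U.sets := fun h =>
    (Cardinal.mk_lt_of_subset_Iio hc subset_rfl).ne (hU _ h)
  have hcompl := (U.mem_or_compl_mem _ (Iio_subset_Iio hc.le)).resolve_left hc'
  convert U.inter_mem _ hA _ hcompl using 1
  ext x
  exact ⟨fun hx => ⟨hx.1, U.sets_subset A hA hx.1, hx.2⟩, fun hx => ⟨hx.1, hx.2.2⟩⟩

theorem inter_iInter_mem (U : UltrafilterOn κ) {n : ℕ} (s : Fin n → Set Ordinal.{u})
    (hs : ∀ k, s k ∈ U.sets) : Iio κ.ord ∩ ⋂ k, s k ∈ U.sets := by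
  induction n with
  | zero => simpa using U.univ_mem
  | succ n ih =>
    have hsplit : Iio κ.ord ∩ ⋂ k, s k = s 0 ∩ (Iio κ.ord ∩ ⋂ k : Fin n, s k.succ) := by
      ext x
      simp only [mem_inter_iff, mem_iInter, Fin.forall_fin_succ]
      tauto
    rw [hsplit]
    exact U.inter_mem _ (hs 0) _ (ih _ fun k => hs k.succ)

theorem IsUniform.exists_not_almostSub (hU : U.IsUniform) (hκ : ℵ₀ ≤ κ) {B : Set Ordinal.{u}}
    (hB : B ∈ U.sets) : ∃ X ∈ U.sets, ¬AlmostSub κ B X := by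
  have hBmk := hU B hB
  obtain ⟨p, hpB, hp, hBp⟩ :=
    Cardinal.exists_subset_mk_eq_mk_diff_eq (hBmk ▸ Cardinal.aleph0_le_lift.mpr hκ)
  rcases U.mem_or_compl_mem p (hpB.trans (U.sets_subset B hB)) with hpU | hpU
  · refine ⟨p, hpU, fun ⟨b, hb, hsub⟩ => ?_⟩
    exact (Cardinal.mk_lt_of_subset_Iio hb hsub).ne (hBp.trans hBmk)
  · refine ⟨_, hpU, fun ⟨b, hb, hsub⟩ => ?_⟩
    have hpb : p ⊆ Iio b := fun x hx => hsub ⟨hpB hx, fun h => h.2 hx⟩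
    exact (Cardinal.mk_lt_of_subset_Iio hb hpb).ne (hp.trans hBmk)

theorem IsADGenSeq.forall_almostSub_of_cofinal {θ : Ordinal.{u}} {A : Ordinal.{u} → Set Ordinal.{u}}
    (hA : U.IsADGenSeq θ A) {B : Set Ordinal.{u}} {c : Ordinal.{u}} (hc : c < κ.ord)
    (hcof : ∀ η < θ, ∃ ζ, η ≤ ζ ∧ ζ < θ ∧ B \ Iio c ⊆ A ζ) :
    ∀ X ∈ U.sets, AlmostSub κ B X := by
  intro X hX
  obtain ⟨_, ⟨η, hη, rfl⟩, hηX⟩ := hA.2.2.2 X hX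
  obtain ⟨ζ, hηζ, hζ, hBζ⟩ := hcof η hη
  exact ((AlmostSub.of_diff_Iio_subset hc hBζ).trans (hA.2.1 η ζ hηζ hζ)).trans hηX

theorem IsADGenSeq.exists_diff_Iio_ne (hU : U.IsUniform) (hκ : ℵ₀ ≤ κ) {θ : Ordinal.{u}}
    {A : Ordinal.{u} → Set Ordinal.{u}} (hA : U.IsADGenSeq θ A) {c : Ordinal.{u}}
    (hc : c < κ.ord) {S : Set Ordinal.{u}} (hS : ∀ η < θ, ∃ ζ ∈ S, η ≤ ζ ∧ ζ < θ)
    {ζ₀ : Ordinal.{u}} (hζ₀ : ζ₀ < θ) : ∃ ζ ∈ S, A ζ \ Iio c ≠ A ζ₀ \ Iio c := by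
  by_contra! h
  obtain ⟨X, hX, hnot⟩ := hU.exists_not_almostSub hκ (hA.1 ζ₀ hζ₀)
  refine hnot (hA.forall_almostSub_of_cofinal hc (fun η hη => ?_) X hX)
  obtain ⟨ζ, hζS, hηζ, hζ⟩ := hS η hη
  exact ⟨ζ, hηζ, hζ, (h ζ hζS).ge.trans sdiff_subset⟩

theorem mk_sets_le (U : UltrafilterOn κ) : #U.sets ≤ Cardinal.lift.{u + 1} (2 ^ κ) := by
  have h := (Cardinal.mk_le_mk_of_subset (fun X hX => U.sets_subset X hX :
    U.sets ⊆ 𝒫 Iio κ.ord)).trans_eq (Cardinal.mk_powerset _)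
  rwa [Cardinal.mk_Iio_ordinal, Cardinal.card_ord, ← Cardinal.lift_two_power] at h

end UltrafilterOn

theorem biUnion_inter_Ico_eq_of_separated {ι α : Type*} [LinearOrder ι] [Preorder α]
    {X : Set ι} {s : ι → Set α} {a b : ι → α} (hs : ∀ j ∈ X, s j ⊆ Ico (a j) (b j))
    (hsep : ∀ j ∈ X, ∀ k ∈ X, j < k → b j ≤ a k) {i : ι} (hi : i ∈ X) :
    (⋃ j ∈ X, s j) ∩ Ico (a i) (b i) = s i := by
  refine Subset.antisymm ?_ fun x hx => ⟨mem_biUnion hi hx, hs i hi hx⟩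
  rintro x ⟨hx, hxi⟩
  obtain ⟨j, hj, hxj⟩ := mem_iUnion₂.mp hx
  have hxj' := hs j hj hxj
  rcases lt_trichotomy j i with hji | rfl | hij
  · exact absurd ((hxj'.2.trans_le (hsep j hj i hi hji)).trans_le hxi.1) (lt_irrefl x)
  · exact hxj
  · exact absurd ((hxi.2.trans_le (hsep i hi j hj hij)).trans_le hxj'.1) (lt_irrefl x)

theorem le_supBelow (μ : Ordinal.{u} → Cardinal.{u}) {i j : Ordinal.{u}} (hji : j < i) :
    μ j ≤ supBelow μ i := by
  have himage : {c | ∃ i', i' < i ∧ c = μ i'} = μ '' Iio i := by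
    ext c; simp [eq_comm]
  unfold supBelow
  rw [himage]
  exact le_csSup Cardinal.bddAbove_of_small ⟨j, hji, rfl⟩

/-- If a scale were bounded on `T` in every coordinate, the bounds would form a member of the
product which no `g β` with `β ∈ T` dominates. -/
theorem IsScale.exists_coord_cofinal {ρ : Ordinal.{u}} {θ : Ordinal.{u} → Cardinal.{u}}
    {τ : Cardinal.{u}} {g : Ordinal.{u} → Ordinal.{u} → Ordinal.{u}} (hg : IsScale ρ θ τ g)
    (hθ : ∀ i < ρ, ℵ₀ ≤ θ i) {T : Set Ordinal.{u}} (hTτ : T ⊆ Iio τ.ord)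
    (hT : ∀ b < τ.ord, ∃ β ∈ T, b < β) :
    ∃ i < ρ, ∀ η < (θ i).ord, ∃ β ∈ T, η < g β i := by
  by_contra! hbdd
  choose b hb hgb using hbdd
  let h : Ordinal.{u} → Ordinal.{u} := fun i => if hi : i < ρ then Order.succ (b i hi) else 0
  have hh : InProd ρ θ h := fun i hi => by
    simpa [h, hi] using (Cardinal.isSuccLimit_ord (hθ i hi)).succ_lt (hb i hi)
  obtain ⟨η, hη, i₁, hi₁, hhη⟩ := hg.2.2 h hh
  obtain ⟨β, hβT, hηβ⟩ := hT η hη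
  obtain ⟨i₂, hi₂, hηβ'⟩ := hg.2.1 η β hηβ (hTτ hβT)
  have hi : max i₁ i₂ < ρ := max_lt hi₁ hi₂
  have hlt := (hhη _ (le_max_left _ _) hi).trans (hηβ' _ (le_max_right _ _) hi)
  simp only [h, dif_pos hi] at hlt
  exact (Order.lt_succ _).not_ge ((hlt.trans_le (hgb _ hi β hβT)).le)

theorem mk_family_le {α : Type (u + 1)} (P : Set (Set Ordinal.{u})) {σ τ : Cardinal.{u}}
    (Y : Set Ordinal.{u} → Ordinal.{u} → Ordinal.{u} → α) (hP : #P ≤ Cardinal.lift.{u + 1} τ)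
    (hστ : σ ≤ τ) (hτ : ℵ₀ ≤ τ) :
    #{S | ∃ X ∈ P, ∃ α, α < σ.ord ∧ ∃ β, β < τ.ord ∧ S = Y X α β} ≤ Cardinal.lift.{u + 1} τ := by
  have hsub : {S | ∃ X ∈ P, ∃ α, α < σ.ord ∧ ∃ β, β < τ.ord ∧ S = Y X α β} ⊆
      range fun p : P × Iio σ.ord × Iio τ.ord => Y p.1 p.2.1 p.2.2 := by
    rintro _ ⟨X, hX, α, hα, β, hβ, rfl⟩
    exact ⟨(⟨X, hX⟩, ⟨α, hα⟩, ⟨β, hβ⟩), rfl⟩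
  refine (Cardinal.mk_le_mk_of_subset hsub).trans (Cardinal.mk_range_le.trans ?_)
  have hτ' : ℵ₀ ≤ Cardinal.lift.{u + 1} τ := Cardinal.aleph0_le_lift.mpr hτ
  simp only [Cardinal.mk_prod, Cardinal.lift_id, Cardinal.mk_Iio_ordinal, Cardinal.card_ord]
  exact Cardinal.mul_le_of_le hτ' hP
    (Cardinal.mul_le_of_le hτ' (Cardinal.lift_le.mpr hστ) le_rfl)

theorem lift_le_mk_image_of_forall_cofinal {α : Type (u + 1)} {τ : Cardinal.{u}}
    (hτ : τ.IsRegular) (φ : Ordinal.{u} → α)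
    (hφ : ∀ T ⊆ Iio τ.ord, (∀ b < τ.ord, ∃ β ∈ T, b < β) → ∃ β ∈ T, ∃ β' ∈ T, φ β ≠ φ β') :
    Cardinal.lift.{u + 1} τ ≤ #(φ '' Iio τ.ord) := by
  by_contra! hsmall
  let f : Iio τ.ord → φ '' Iio τ.ord := fun β => ⟨φ β, mem_image_of_mem φ β.2⟩
  have hreg := hτ.lift.{u + 1}
  obtain ⟨W, hW⟩ := Cardinal.infinite_pigeonhole_card f _
    (by rw [Cardinal.mk_Iio_ordinal, Cardinal.card_ord]) hreg.aleph0_le (hreg.cof_ord.symm ▸ hsmall)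
  have hT : Cardinal.lift.{u + 1} τ ≤ #(Subtype.val '' (f ⁻¹' {W})) := by
    rwa [Cardinal.mk_image_eq Subtype.val_injective]
  obtain ⟨_, ⟨β, hβ, rfl⟩, _, ⟨β', hβ', rfl⟩, hne⟩ :=
    hφ _ (by simp [image_subset_iff]) fun b hb =>
      Cardinal.exists_lt_mem_of_lift_le_mk hτ.aleph0_le hT hb
  exact hne (congrArg Subtype.val (hβ.trans hβ'.symm))

theorem exists_ne_biUnion_of_cofinal {ρ : Ordinal.{u}} {τ : Cardinal.{u}}
    {μ θ : Ordinal.{u} → Cardinal.{u}} {U : (i : Ordinal.{u}) → UltrafilterOn (μ i)}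
    {A : Ordinal.{u} → Ordinal.{u} → Set Ordinal.{u}} {g : Ordinal.{u} → Ordinal.{u} → Ordinal.{u}}
    {c : Ordinal.{u} → Ordinal.{u}} (hμ : ∀ i < ρ, ℵ₀ ≤ μ i) (hθ : ∀ i < ρ, ℵ₀ ≤ θ i)
    (hU : ∀ i < ρ, (U i).IsUniform) (hA : ∀ i < ρ, (U i).IsADGenSeq (θ i).ord (A i))
    (hAsub : ∀ i < ρ, ∀ η < (θ i).ord, A i η ⊆ Ico (supBelow μ i).ord (μ i).ord)
    (hc : ∀ i < ρ, c i < (μ i).ord) (hg : IsScale ρ θ τ g) {T : Set Ordinal.{u}}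
    (hTτ : T ⊆ Iio τ.ord) (hT : ∀ b < τ.ord, ∃ β ∈ T, b < β) :
    ∃ β ∈ T, ∃ β' ∈ T, (⋃ i ∈ Iio ρ, A i (g β i) \ Iio (c i)) ≠
      ⋃ i ∈ Iio ρ, A i (g β' i) \ Iio (c i) := by
  obtain ⟨i, hi, hcof⟩ := hg.exists_coord_cofinal hθ hTτ hT
  obtain ⟨β₀, hβ₀, -⟩ := hcof 0 (Cardinal.ord_pos.mpr (Cardinal.aleph0_pos.trans_le (hθ i hi)))
  have hblock : ∀ β ∈ T, (⋃ j ∈ Iio ρ, A j (g β j) \ Iio (c j)) ∩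
      Ico (supBelow μ i).ord (μ i).ord = A i (g β i) \ Iio (c i) := fun β hβ =>
    biUnion_inter_Ico_eq_of_separated
      (fun j hj => sdiff_subset.trans (hAsub j hj _ (hg.1 β (hTτ hβ) j hj)))
      (fun _ _ _ _ hjk => Cardinal.ord_le_ord.mpr (le_supBelow μ hjk)) hi
  have hS : ∀ η < (θ i).ord, ∃ ζ ∈ (g · i) '' T, η ≤ ζ ∧ ζ < (θ i).ord := fun η hη =>
    let ⟨β, hβ, hηβ⟩ := hcof η hη
    ⟨g β i, ⟨β, hβ, rfl⟩, hηβ.le, hg.1 β (hTτ hβ) i hi⟩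
  obtain ⟨_, ⟨β, hβ, rfl⟩, hne⟩ :=
    (hA i hi).exists_diff_Iio_ne (hU i hi) (hμ i hi) (hc i hi) hS (hg.1 β₀ (hTτ hβ₀) i hi)
  exact ⟨β, hβ, β₀, hβ₀, fun h => hne (by rw [← hblock β hβ, ← hblock β₀ hβ₀, h])⟩

def MemCofinally {μ : Ordinal.{u} → Cardinal.{u}} (ρ : Ordinal.{u})
    (U : (i : Ordinal.{u}) → UltrafilterOn (μ i)) (W : Set Ordinal.{u}) : Prop :=
  ∀ i₀ < ρ, ∃ i, i₀ < i ∧ i < ρ ∧ ∃ S ∈ (U i).sets, S ⊆ W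

theorem memCofinally_iInter_biUnion {ρ : Cardinal.{u}} {μ : Ordinal.{u} → Cardinal.{u}}
    {U : (i : Ordinal.{u}) → UltrafilterOn (μ i)} {E : UltrafilterOn ρ} (hE : E.IsUniform)
    (hρ : ℵ₀ ≤ ρ) {n : ℕ} (Xs : Fin n → Set Ordinal.{u}) (hXs : ∀ k, Xs k ∈ E.sets)
    (B : Fin n → Ordinal.{u} → Set Ordinal.{u}) (hB : ∀ k, ∀ i < ρ.ord, B k i ∈ (U i).sets) :
    MemCofinally ρ.ord U (⋂ k, ⋃ i ∈ Xs k, B k i) := by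
  intro i₀ hi₀
  obtain ⟨i, hi, hi₀i⟩ := hE.exists_lt_mem hρ (E.inter_iInter_mem Xs hXs) hi₀
  refine ⟨i, hi₀i, hi.1, _, (U i).inter_iInter_mem (B · i) fun k => hB k i hi.1, ?_⟩
  rintro x ⟨-, hx⟩
  exact mem_iInter.mpr fun k =>
    mem_biUnion (mem_iInter.mp hi.2 k) (mem_iInter.mp hx k)

namespace MemCofinally

variable {κ : Cardinal.{u}} {ρ : Ordinal.{u}} {μ : Ordinal.{u} → Cardinal.{u}}
  {U : (i : Ordinal.{u}) → UltrafilterOn (μ i)} {W : Set Ordinal.{u}}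

theorem exists_lt_mem (hW : MemCofinally ρ U W) (hμ : ∀ i < ρ, ℵ₀ ≤ μ i)
    (hU : ∀ i < ρ, (U i).IsUniform) (hμmono : ∀ i j, i < j → j < ρ → μ i < μ j)
    (hμlt : ∀ i < ρ, μ i < κ) (hμcof : ∀ c < κ, ∃ i < ρ, c ≤ μ i) {γ : Ordinal.{u}}
    (hγ : γ < κ.ord) : ∃ δ, γ < δ ∧ δ < κ.ord ∧ δ ∈ W := by
  obtain ⟨i₀, hi₀, hγi₀⟩ := hμcof γ.card (Cardinal.lt_ord.mp hγ)
  obtain ⟨i, hi₀i, hi, S, hS, hSW⟩ := hW i₀ hi₀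
  obtain ⟨δ, hδS, hγδ⟩ := (hU i hi).exists_lt_mem (hμ i hi) hS
    (Cardinal.lt_ord.mpr (hγi₀.trans_lt (hμmono i₀ i hi₀i hi)))
  exact ⟨δ, hγδ, ((U i).sets_subset S hS hδS).trans (Cardinal.ord_lt_ord.mpr (hμlt i hi)),
    hSW hδS⟩

theorem mk_eq (hW : MemCofinally ρ U W) (hU : ∀ i < ρ, (U i).IsUniform)
    (hμmono : ∀ i j, i < j → j < ρ → μ i < μ j) (hμlt : ∀ i < ρ, μ i < κ)
    (hμcof : ∀ c < κ, ∃ i < ρ, c ≤ μ i) {Z : Set Ordinal.{u}} (hZ : Z ⊆ Iio κ.ord)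
    (hWZ : Iio κ.ord ∩ W ⊆ Z) : #Z = Cardinal.lift.{u + 1} κ := by
  refine le_antisymm ?_ (le_of_forall_lt fun c hc => ?_)
  · simpa [Cardinal.mk_Iio_ordinal] using Cardinal.mk_le_mk_of_subset hZ
  obtain ⟨c, rfl⟩ := Cardinal.mem_range_lift_of_le hc.le
  obtain ⟨i₀, hi₀, hci₀⟩ := hμcof c (Cardinal.lift_lt.mp hc)
  obtain ⟨i, hi₀i, hi, S, hS, hSW⟩ := hW i₀ hi₀
  calc Cardinal.lift.{u + 1} c < Cardinal.lift.{u + 1} (μ i) :=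
        Cardinal.lift_lt.mpr (hci₀.trans_lt (hμmono i₀ i hi₀i hi))
    _ = #S := (hU i hi S hS).symm
    _ ≤ #Z := Cardinal.mk_le_mk_of_subset fun x hx =>
        hWZ ⟨((U i).sets_subset S hS hx).trans (Cardinal.ord_lt_ord.mpr (hμlt i hi)), hSW hx⟩

end MemCofinally

theorem statement1_general
    (κ ρ σ τ : Cardinal.{u})
    (hκinf : ℵ₀ ≤ κ) (hκcof : κ.ord.cof = ρ)
    (h2ρ : 2 ^ ρ ≤ κ)
    (μ θ : Ordinal.{u} → Cardinal.{u})
    (hρμ0 : ρ < μ 0)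
    (hμmono : ∀ i j, i < j → j < ρ.ord → μ i < μ j)
    (hμlt : ∀ i, i < ρ.ord → μ i < κ)
    (hμcofinal : ∀ c, c < κ → ∃ i, i < ρ.ord ∧ c ≤ μ i)
    (hθreg : ∀ i, i < ρ.ord → (θ i).IsRegular)
    (Ui : (i : Ordinal.{u}) → UltrafilterOn (μ i))
    (A : Ordinal.{u} → Ordinal.{u} → Set Ordinal.{u})
    (hUi : ∀ i, i < ρ.ord → (Ui i).IsUniform ∧ (Ui i).IsComplete ∧
      (Ui i).IsADGenSeq (θ i).ord (A i))
    (hAsub : ∀ i, i < ρ.ord → ∀ η, η < (θ i).ord →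
      A i η ⊆ Set.Ico (supBelow μ i).ord (μ i).ord)
    (f g : Ordinal.{u} → Ordinal.{u} → Ordinal.{u})
    (hκσ : κ < σ)
    (hf : IsScale ρ.ord μ σ f)
    (hτreg : τ.IsRegular) (hστ : σ ≤ τ)
    (hg : IsScale ρ.ord θ τ g)
    (E : UltrafilterOn ρ) (hE : E.IsUniform)
    (Y : Set Ordinal.{u} → Ordinal.{u} → Ordinal.{u} → Set Ordinal.{u})
    (hY : ∀ X α β, Y X α β = ⋃ i ∈ X, (A i (g β i) \ Set.Iio (f α i)))
    :
    #({S : Set Ordinal.{u} | ∃ X ∈ E.sets, ∃ α, α < σ.ord ∧ ∃ β, β < τ.ord ∧ S = Y X α β})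
        = Cardinal.lift.{u + 1, u} τ ∧
    (∀ n : ℕ, ∀ γ, γ < κ.ord →
      ∀ Xs : Fin n → Set Ordinal.{u}, ∀ αs βs : Fin n → Ordinal.{u},
      (∀ k, Xs k ∈ E.sets) → (∀ k, αs k < σ.ord) → (∀ k, βs k < τ.ord) →
      ∃ δ, γ < δ ∧ δ < κ.ord ∧ ∀ k, δ ∈ Y (Xs k) (αs k) (βs k)) ∧
    (∀ Z, Z ⊆ Set.Iio κ.ord →
      (∃ (n : ℕ) (Xs : Fin n → Set Ordinal.{u}) (αs βs : Fin n → Ordinal.{u}),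
        (∀ k, Xs k ∈ E.sets) ∧ (∀ k, αs k < σ.ord) ∧ (∀ k, βs k < τ.ord) ∧
        Set.Iio κ.ord ∩ (⋂ k, Y (Xs k) (αs k) (βs k)) ⊆ Z) →
      #Z = Cardinal.lift.{u + 1, u} κ) := by
  obtain rfl : Y = fun X α β => ⋃ i ∈ X, (A i (g β i) \ Iio (f α i)) := by
    funext X α β
    exact hY X α β
  have hρ : ℵ₀ ≤ ρ := hκcof ▸ Ordinal.aleph0_le_cof_iff.mpr
    (Ordinal.one_lt_cof_iff.mpr (Cardinal.isSuccLimit_ord hκinf))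
  have hμ : ∀ i < ρ.ord, ℵ₀ ≤ μ i := fun i hi => by
    rcases eq_zero_or_pos i with rfl | hi0
    · exact hρ.trans hρμ0.le
    · exact hρ.trans (hρμ0.trans (hμmono 0 i hi0 hi)).le
  have hU : ∀ i < ρ.ord, (Ui i).IsUniform := fun i hi => (hUi i hi).1
  have hlarge : ∀ {n} (Xs : Fin n → Set Ordinal.{u}) (αs βs : Fin n → Ordinal.{u}),
      (∀ k, Xs k ∈ E.sets) → (∀ k, αs k < σ.ord) → (∀ k, βs k < τ.ord) →
      MemCofinally ρ.ord Ui (⋂ k, ⋃ i ∈ Xs k, A i (g (βs k) i) \ Iio (f (αs k) i)) :=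
    fun Xs αs βs hXs hαs hβs => memCofinally_iInter_biUnion hE hρ Xs hXs _ fun k i hi =>
      (hU i hi).diff_Iio_mem ((hUi i hi).2.2.1 _ (hg.1 _ (hβs k) i hi)) (hf.1 _ (hαs k) i hi)
  have h0σ : (0 : Ordinal.{u}) < σ.ord := Cardinal.ord_pos.mpr (zero_le.trans_lt hκσ)
  refine ⟨le_antisymm ?_ ?_, ?_, ?_⟩
  · exact mk_family_le _ _ (E.mk_sets_le.trans (Cardinal.lift_le.mpr
      (h2ρ.trans (hκσ.trans_le hστ).le))) hστ hτreg.aleph0_le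
  · refine (lift_le_mk_image_of_forall_cofinal hτreg _ fun T hTτ hT =>
      exists_ne_biUnion_of_cofinal hμ (fun i hi => (hθreg i hi).aleph0_le) hU
        (fun i hi => (hUi i hi).2.2) hAsub (fun i hi => hf.1 0 h0σ i hi) hg hTτ hT).trans
      (Cardinal.mk_le_mk_of_subset ?_)
    rintro _ ⟨β, hβ, rfl⟩
    exact ⟨_, E.univ_mem, 0, h0σ, β, hβ, rfl⟩
  · intro n γ hγ Xs αs βs hXs hαs hβs
    obtain ⟨δ, hγδ, hδ, hδW⟩ :=
      (hlarge Xs αs βs hXs hαs hβs).exists_lt_mem hμ hU hμmono hμlt hμcofinal hγ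
    exact ⟨δ, hγδ, hδ, mem_iInter.mp hδW⟩
  · rintro Z hZ ⟨n, Xs, αs, βs, hXs, hαs, hβs, hWZ⟩
    exact (hlarge Xs αs βs hXs hαs hβs).mk_eq hU hμmono hμlt hμcofinal hZ hWZ

/-- the sets `Y X α β` form a family of cardinality `τ` whose finite
intersections are unbounded in `κ`; in particular they generate a proper uniform filter on `κ`. -/
theorem statement1
    (κ ρ σ τ : Cardinal.{u})
    (hκinf : ℵ₀ ≤ κ) (hκsing : κ.ord.cof < κ) (hκcof : κ.ord.cof = ρ)
    (h2ρ : 2 ^ ρ ≤ κ)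
    (μ θ : Ordinal.{u} → Cardinal.{u})
    (hρμ0 : ρ < μ 0)
    (hμmono : ∀ i j, i < j → j < ρ.ord → μ i < μ j)
    (hμlt : ∀ i, i < ρ.ord → μ i < κ)
    (hμcofinal : ∀ c, c < κ → ∃ i, i < ρ.ord ∧ c ≤ μ i)
    (hθreg : ∀ i, i < ρ.ord → (θ i).IsRegular)
    (Ui : (i : Ordinal.{u}) → UltrafilterOn (μ i))
    (A : Ordinal.{u} → Ordinal.{u} → Set Ordinal.{u})
    (hUi : ∀ i, i < ρ.ord → (Ui i).IsUniform ∧ (Ui i).IsComplete ∧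
      (Ui i).IsADGenSeq (θ i).ord (A i))
    (hAsub : ∀ i, i < ρ.ord → ∀ η, η < (θ i).ord →
      A i η ⊆ Set.Ico (supBelow μ i).ord (μ i).ord)
    (f g : Ordinal.{u} → Ordinal.{u} → Ordinal.{u})
    (hσreg : σ.IsRegular) (hκσ : κ < σ)
    (hf : IsScale ρ.ord μ σ f)
    (hτreg : τ.IsRegular) (hστ : σ ≤ τ)
    (hg : IsScale ρ.ord θ τ g)
    (E : UltrafilterOn ρ) (hE : E.IsUniform)
    (Y : Set Ordinal.{u} → Ordinal.{u} → Ordinal.{u} → Set Ordinal.{u})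
    (hY : ∀ X α β, Y X α β = ⋃ i ∈ X, (A i (g β i) \ Set.Iio (f α i)))
    :
    #({S : Set Ordinal.{u} | ∃ X ∈ E.sets, ∃ α, α < σ.ord ∧ ∃ β, β < τ.ord ∧ S = Y X α β})
        = Cardinal.lift.{u + 1, u} τ ∧
    (∀ n : ℕ, ∀ γ, γ < κ.ord →
      ∀ Xs : Fin n → Set Ordinal.{u}, ∀ αs βs : Fin n → Ordinal.{u},
      (∀ k, Xs k ∈ E.sets) → (∀ k, αs k < σ.ord) → (∀ k, βs k < τ.ord) →
      ∃ δ, γ < δ ∧ δ < κ.ord ∧ ∀ k, δ ∈ Y (Xs k) (αs k) (βs k)) ∧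
    (∀ Z, Z ⊆ Set.Iio κ.ord →
      (∃ (n : ℕ) (Xs : Fin n → Set Ordinal.{u}) (αs βs : Fin n → Ordinal.{u}),
        (∀ k, Xs k ∈ E.sets) ∧ (∀ k, αs k < σ.ord) ∧ (∀ k, βs k < τ.ord) ∧
        Set.Iio κ.ord ∩ (⋂ k, Y (Xs k) (αs k) (βs k)) ⊆ Z) →
      #Z = Cardinal.lift.{u + 1, u} κ) :=
  statement1_general κ ρ σ τ hκinf hκcof h2ρ μ θ hρμ0 hμmono hμlt hμcofinal hθreg Ui A hUi hAsub f g
    hκσ hf hτreg hστ hg E hE Y hY
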